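/- Fix S, K > 0, σ > 0, τ > 0, r ∈ ℝ, ρ ∈ (−1,1), μ̃ ∈ ℝ. Let P^{s,α} be the seller's put price with δ_s = r − μ̃ + α√(1−ρ²)σ and P^{b,β} the buyer's put price with δ_b = r − μ̃ − β√(1−ρ²)σ, both given by P^δ(S) = K e^{−rτ} Φ(d₂) − S e^{−δτ} Φ(d₁) with d₂ = (ln(K/S) − (r − δ − σ²/2)τ)/(σ√τ), d₁ = (ln(K/S) − (r − δ + σ²/2)τ)/(σ√τ). Then for all α, β ≥ 0, P^{b,β}(S) ≤ P^{s,α}(S); i.e., the bid-ask spread for the put is non-negative. -/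
import Mathlib


noncomputable def stdNormalCDF (x : ℝ) : ℝ :=
  ∫ t in Set.Iic x, Real.exp (-t^2/2) / Real.sqrt (2*Real.pi)

lemma gaussPDF_integrable :
    MeasureTheory.Integrable (fun t : ℝ => Real.exp (-t^2/2) / Real.sqrt (2*Real.pi)) := by
  have h : MeasureTheory.Integrable (fun t : ℝ => Real.exp (-(1/2 : ℝ) * t^2)) :=
    integrable_exp_neg_mul_sq (by norm_num)
  have := h.div_const (Real.sqrt (2*Real.pi))
  convert this using 2 with t
  ring_nf

lemma gaussPDF_continuous :
    Continuous (fun t : ℝ => Real.exp (-t^2/2) / Real.sqrt (2*Real.pi)) := by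
  fun_prop

lemma stdNormalCDF_nonneg (x : ℝ) : 0 ≤ stdNormalCDF x := by
  apply MeasureTheory.setIntegral_nonneg measurableSet_Iic
  intro t _
  positivity

lemma hasDerivAt_stdNormalCDF (x : ℝ) :
    HasDerivAt stdNormalCDF (Real.exp (-x^2/2) / Real.sqrt (2*Real.pi)) x := by
  set f : ℝ → ℝ := fun t => Real.exp (-t^2/2) / Real.sqrt (2*Real.pi) with hf
  have hint : MeasureTheory.Integrable f := gaussPDF_integrable
  have hfun : stdNormalCDF = fun y => stdNormalCDF 0 + ∫ t in (0:ℝ)..y, f t := by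
    funext y
    have := intervalIntegral.integral_Iic_sub_Iic (μ := MeasureTheory.volume)
      (hint.integrableOn) (hint.integrableOn) (a := (0:ℝ)) (b := y)
    simp only [stdNormalCDF]
    rw [← this]
    ring
  have hd : HasDerivAt (fun y => ∫ t in (0:ℝ)..y, f t) (f x) x :=
    intervalIntegral.integral_hasDerivAt_right hint.intervalIntegrable
      hint.aestronglyMeasurable.stronglyMeasurableAtFilter gaussPDF_continuous.continuousAt
  rw [hfun]
  exact hd.const_add (stdNormalCDF 0)

/-- Non-negativity of the bid-ask spread for the European put:
the buyer's price (dividend parameter `δ_b = r - μ̃ - β√(1-ρ²)σ`) is at most the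
seller's price (dividend parameter `δ_s = r - μ̃ + α√(1-ρ²)σ`). -/
theorem stmt8 (S K σ τ r ρ μt : ℝ) (hS : 0 < S) (hK : 0 < K) (hσ : 0 < σ) (hτ : 0 < τ)
    (hρ : ρ ∈ Set.Ioo (-1 : ℝ) 1) (α β : ℝ) (hα : 0 ≤ α) (hβ : 0 ≤ β) :
    K * Real.exp (-r*τ) *
        stdNormalCDF ((Real.log (K/S)
          - (r - (r - μt - β * Real.sqrt (1 - ρ^2) * σ) - σ^2/2)*τ)/(σ*Real.sqrt τ))
      - S * Real.exp (-(r - μt - β * Real.sqrt (1 - ρ^2) * σ)*τ) *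
        stdNormalCDF ((Real.log (K/S)
          - (r - (r - μt - β * Real.sqrt (1 - ρ^2) * σ) + σ^2/2)*τ)/(σ*Real.sqrt τ))
    ≤ K * Real.exp (-r*τ) *
        stdNormalCDF ((Real.log (K/S)
          - (r - (r - μt + α * Real.sqrt (1 - ρ^2) * σ) - σ^2/2)*τ)/(σ*Real.sqrt τ))
      - S * Real.exp (-(r - μt + α * Real.sqrt (1 - ρ^2) * σ)*τ) *
        stdNormalCDF ((Real.log (K/S)
          - (r - (r - μt + α * Real.sqrt (1 - ρ^2) * σ) + σ^2/2)*τ)/(σ*Real.sqrt τ)) := by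
  set a : ℝ := Real.log (K/S) with ha
  set s : ℝ := σ * Real.sqrt τ with hsdef
  have hsqτ : Real.sqrt τ > 0 := Real.sqrt_pos.mpr hτ
  have hs : 0 < s := mul_pos hσ hsqτ
  have hs2 : s^2 = σ^2 * τ := by
    rw [hsdef, mul_pow, Real.sq_sqrt hτ.le]
  set P : ℝ → ℝ := fun δ =>
    K * Real.exp (-r*τ) * stdNormalCDF ((a - (r - δ - σ^2/2)*τ)/s)
      - S * Real.exp (-δ*τ) * stdNormalCDF ((a - (r - δ + σ^2/2)*τ)/s) with hP
  -- the key Black–Scholes-type identity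
  have key : ∀ δ : ℝ,
      K * Real.exp (-r*τ) *
        (Real.exp (-((a - (r - δ - σ^2/2)*τ)/s)^2/2) / Real.sqrt (2*Real.pi))
      = S * Real.exp (-δ*τ) *
        (Real.exp (-((a - (r - δ + σ^2/2)*τ)/s)^2/2) / Real.sqrt (2*Real.pi)) := by
    intro δ
    have haa : a = Real.log K - Real.log S := Real.log_div hK.ne' hS.ne'
    have h2 : K * Real.exp (-r*τ) * Real.exp (-((a - (r - δ - σ^2/2)*τ)/s)^2/2)
        = S * Real.exp (-δ*τ) * Real.exp (-((a - (r - δ + σ^2/2)*τ)/s)^2/2) := by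
      rw [← Real.exp_log hK, ← Real.exp_log hS, ← Real.exp_add, ← Real.exp_add,
        ← Real.exp_add, ← Real.exp_add]
      congr 1
      have hexp : ((a - (r - δ - σ^2/2)*τ)/s)^2 - ((a - (r - δ + σ^2/2)*τ)/s)^2
          = 2*(a - (r - δ)*τ) := by
        have hsq : Real.sqrt τ ^ 2 = τ := Real.sq_sqrt hτ.le
        field_simp
        linear_combination (-8*σ^2*(a - r*τ + δ*τ)) * hsq
      have : ((a - (r - δ - σ^2/2)*τ)/s)^2/2 - ((a - (r - δ + σ^2/2)*τ)/s)^2/2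
          = Real.log K - Real.log S - (r - δ)*τ := by
        rw [div_sub_div_same, hexp, haa]; ring
      linarith
    linear_combination h2 / Real.sqrt (2*Real.pi)
  -- derivative of P
  have hderiv : ∀ δ : ℝ, HasDerivAt P (τ * (S * Real.exp (-δ*τ)) *
      stdNormalCDF ((a - (r - δ + σ^2/2)*τ)/s)) δ := by
    intro δ
    have hu : ∀ h : ℝ, HasDerivAt (fun x : ℝ => (a - (r - x - h)*τ)/s) (τ/s) δ := by
      intro h
      have h1 : HasDerivAt (fun x : ℝ => (τ/s) * x + (a - (r - h)*τ)/s) (τ/s) δ := by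
        simpa using ((hasDerivAt_id δ).const_mul (τ/s)).add_const ((a - (r - h)*τ)/s)
      convert h1 using 2 with x
      ring
    have hu' : ∀ h : ℝ, HasDerivAt (fun x : ℝ => (a - (r - x + h)*τ)/s) (τ/s) δ := by
      intro h
      have h1 : HasDerivAt (fun x : ℝ => (τ/s) * x + (a - (r + h)*τ)/s) (τ/s) δ := by
        simpa using ((hasDerivAt_id δ).const_mul (τ/s)).add_const ((a - (r + h)*τ)/s)
      convert h1 using 2 with x
      ring
    have hΦ2 : HasDerivAt (fun x : ℝ => stdNormalCDF ((a - (r - x - σ^2/2)*τ)/s))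
        (Real.exp (-((a - (r - δ - σ^2/2)*τ)/s)^2/2) / Real.sqrt (2*Real.pi) * (τ/s)) δ :=
      (hasDerivAt_stdNormalCDF _).comp δ (hu (σ^2/2))
    have hΦ1 : HasDerivAt (fun x : ℝ => stdNormalCDF ((a - (r - x + σ^2/2)*τ)/s))
        (Real.exp (-((a - (r - δ + σ^2/2)*τ)/s)^2/2) / Real.sqrt (2*Real.pi) * (τ/s)) δ :=
      (hasDerivAt_stdNormalCDF _).comp δ (hu' (σ^2/2))
    have hE : HasDerivAt (fun x : ℝ => S * Real.exp (-x*τ))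
        (S * (Real.exp (-δ*τ) * (-τ))) δ := by
      have h0 : HasDerivAt (fun x : ℝ => -x*τ) (-τ) δ := by
        simpa using ((hasDerivAt_id δ).neg.mul_const τ)
      exact (h0.exp.const_mul S).congr_deriv (by ring)
    have hprod := hE.mul hΦ1
    have hall := ((hΦ2.const_mul (K * Real.exp (-r*τ))).sub hprod)
    apply hall.congr_deriv
    have hk := key δ
    linear_combination (τ/s) * hk
  have hmono : Monotone P := by
    apply monotone_of_deriv_nonneg (fun x => (hderiv x).differentiableAt)
    intro x
    rw [(hderiv x).deriv]
    have := stdNormalCDF_nonneg ((a - (r - x + σ^2/2)*τ)/s)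
    positivity
  have hc : 0 ≤ Real.sqrt (1 - ρ^2) * σ := by positivity
  have hle : r - μt - β * Real.sqrt (1 - ρ^2) * σ ≤ r - μt + α * Real.sqrt (1 - ρ^2) * σ := by
    nlinarith
  exact hmono hle
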